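/- Let α₁,α₂,α₃,ε ∈ ℝ and let (x₁,x₂,x₃,x̃₁,x̃₂,x̃₃) ∈ ℝ⁶ satisfy the dET equations x̃_i − x_i = εα_i(x̃_j x_k + x_j x̃_k) for all cyclic permutations (i,j,k) of (1,2,3), and assume 1 − ε²α_jα_k x_i² ≠ 0 for each i. Set H_i(ε) = (α_j x_k² − α_k x_j²)/(1 − ε²α_jα_k x_i²). Then for each cyclic permutation (i,j,k) of (1,2,3) the pair (x_i, x̃_i) satisfies the biquadratic relation −4ε²α_jα_k · x_i²x̃_i² + (1 + ε²α_j H_j(ε))(1 − ε²α_k H_k(ε)) · (x_i² + x̃_i²) − 2(1 − ε²α_j H_j(ε))(1 + ε²α_k H_k(ε)) · x_i x̃_i + 4ε² H_j(ε) H_k(ε) = 0. -/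

import Mathlib

/-!
The dET equations are linear in `x̃`, and Cramer's rule gives `x̃₁ = dETNum / dETDet`, where the
determinant `dETDet` is cyclically symmetric. Substituting this into the biquadratic and clearing
the denominators of `H₂`, `H₃` and `x̃₁` leaves a polynomial identity. The determinant does not
vanish: away from characteristic 2 the product of the three denominators `1 - ε²αⱼαₖxᵢ²` is a
combination of `dETDet` and `dETNum`. The other two relations follow by cyclic symmetry.
-/

section

variable {K : Type*} [Field K]

def dETBiquadratic (ε aj ak Hj Hk x y : K) : K :=
  -(4 * ε ^ 2 * aj * ak) * (x ^ 2 * y ^ 2)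
    + (1 + ε ^ 2 * aj * Hj) * (1 - ε ^ 2 * ak * Hk) * (x ^ 2 + y ^ 2)
    - 2 * (1 - ε ^ 2 * aj * Hj) * (1 + ε ^ 2 * ak * Hk) * (x * y)
    + 4 * ε ^ 2 * Hj * Hk

def dETDet (ε a1 a2 a3 x1 x2 x3 : K) : K :=
  1 - ε ^ 2 * (a2 * a3 * x1 ^ 2 + a3 * a1 * x2 ^ 2 + a1 * a2 * x3 ^ 2)
    - 2 * ε ^ 3 * a1 * a2 * a3 * x1 * x2 * x3

def dETNum (ε a1 a2 a3 x1 x2 x3 : K) : K :=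
  x1 * (1 + ε ^ 2 * (a3 * a1 * x2 ^ 2 + a1 * a2 * x3 ^ 2 - a2 * a3 * x1 ^ 2))
    + 2 * ε * a1 * x2 * x3

def dETBiquadraticHomog (ε aj ak Gj Gk Dj Dk x y z : K) : K :=
  -(4 * ε ^ 2 * aj * ak) * Dj * Dk * (x ^ 2 * y ^ 2)
    + (Dj + ε ^ 2 * aj * Gj) * (Dk - ε ^ 2 * ak * Gk) * (x ^ 2 * z ^ 2 + y ^ 2)
    - 2 * (Dj - ε ^ 2 * aj * Gj) * (Dk + ε ^ 2 * ak * Gk) * (x * y * z)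
    + 4 * ε ^ 2 * Gj * Gk * z ^ 2

variable {ε a1 a2 a3 x1 x2 x3 xt1 xt2 xt3 : K}

theorem dETDet_mul_eq_dETNum
    (h1 : xt1 - x1 = ε * a1 * (xt2 * x3 + x2 * xt3))
    (h2 : xt2 - x2 = ε * a2 * (xt3 * x1 + x3 * xt1))
    (h3 : xt3 - x3 = ε * a3 * (xt1 * x2 + x1 * xt2)) :
    dETDet ε a1 a2 a3 x1 x2 x3 * xt1 = dETNum ε a1 a2 a3 x1 x2 x3 := by
  unfold dETDet dETNum
  linear_combination (1 - ε ^ 2 * a2 * a3 * x1 ^ 2) * h1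
    + (ε * a1 * x3 + ε ^ 2 * a1 * a3 * x1 * x2) * h2
    + (ε * a1 * x2 + ε ^ 2 * a1 * a2 * x1 * x3) * h3

theorem two_mul_denominators_eq :
    2 * ((1 - ε ^ 2 * a2 * a3 * x1 ^ 2) * (1 - ε ^ 2 * a3 * a1 * x2 ^ 2)
      * (1 - ε ^ 2 * a1 * a2 * x3 ^ 2))
      = (2 - ε ^ 2 * a2 * a3 * x1 ^ 2 + ε ^ 3 * a1 * a2 * a3 * x1 * x2 * x3)
          * dETDet ε a1 a2 a3 x1 x2 x3
        + (ε ^ 2 * a2 * a3 * x1 + ε ^ 3 * a1 * a2 * a3 * x2 * x3) * dETNum ε a1 a2 a3 x1 x2 x3 := by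
  unfold dETDet dETNum
  ring

theorem dETBiquadratic_div_mul {aj ak Gj Gk Dj Dk x y z : K}
    (hDj : Dj ≠ 0) (hDk : Dk ≠ 0) (hz : z ≠ 0) :
    dETBiquadratic ε aj ak (Gj / Dj) (Gk / Dk) x (y / z) * (Dj * Dk * z ^ 2)
      = dETBiquadraticHomog ε aj ak Gj Gk Dj Dk x y z := by
  unfold dETBiquadratic dETBiquadraticHomog
  field_simp

theorem dETBiquadraticHomog_dETNum_dETDet :
    dETBiquadraticHomog ε a2 a3 (a3 * x1 ^ 2 - a1 * x3 ^ 2) (a1 * x2 ^ 2 - a2 * x1 ^ 2)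
      (1 - ε ^ 2 * a3 * a1 * x2 ^ 2) (1 - ε ^ 2 * a1 * a2 * x3 ^ 2)
      x1 (dETNum ε a1 a2 a3 x1 x2 x3) (dETDet ε a1 a2 a3 x1 x2 x3) = 0 := by
  unfold dETBiquadraticHomog dETDet dETNum
  ring

theorem dETDet_ne_zero [NeZero (2 : K)]
    (h1 : xt1 - x1 = ε * a1 * (xt2 * x3 + x2 * xt3))
    (h2 : xt2 - x2 = ε * a2 * (xt3 * x1 + x3 * xt1))
    (h3 : xt3 - x3 = ε * a3 * (xt1 * x2 + x1 * xt2))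
    (hd1 : 1 - ε ^ 2 * a2 * a3 * x1 ^ 2 ≠ 0)
    (hd2 : 1 - ε ^ 2 * a3 * a1 * x2 ^ 2 ≠ 0)
    (hd3 : 1 - ε ^ 2 * a1 * a2 * x3 ^ 2 ≠ 0) :
    dETDet ε a1 a2 a3 x1 x2 x3 ≠ 0 := by
  intro hΔ
  have hN : dETNum ε a1 a2 a3 x1 x2 x3 = 0 := by
    rw [← dETDet_mul_eq_dETNum h1 h2 h3, hΔ, zero_mul]
  have hprod := two_mul_denominators_eq (ε := ε) (a1 := a1) (a2 := a2) (a3 := a3)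
    (x1 := x1) (x2 := x2) (x3 := x3)
  rw [hΔ, hN, mul_zero, mul_zero, add_zero] at hprod
  exact mul_ne_zero two_ne_zero (mul_ne_zero (mul_ne_zero hd1 hd2) hd3) hprod

theorem dETBiquadratic_eq_zero [NeZero (2 : K)] {H2 H3 : K}
    (h1 : xt1 - x1 = ε * a1 * (xt2 * x3 + x2 * xt3))
    (h2 : xt2 - x2 = ε * a2 * (xt3 * x1 + x3 * xt1))
    (h3 : xt3 - x3 = ε * a3 * (xt1 * x2 + x1 * xt2))
    (hd1 : 1 - ε ^ 2 * a2 * a3 * x1 ^ 2 ≠ 0)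
    (hd2 : 1 - ε ^ 2 * a3 * a1 * x2 ^ 2 ≠ 0)
    (hd3 : 1 - ε ^ 2 * a1 * a2 * x3 ^ 2 ≠ 0)
    (hH2 : H2 = (a3 * x1 ^ 2 - a1 * x3 ^ 2) / (1 - ε ^ 2 * a3 * a1 * x2 ^ 2))
    (hH3 : H3 = (a1 * x2 ^ 2 - a2 * x1 ^ 2) / (1 - ε ^ 2 * a1 * a2 * x3 ^ 2)) :
    dETBiquadratic ε a2 a3 H2 H3 x1 xt1 = 0 := by
  have hΔ := dETDet_ne_zero h1 h2 h3 hd1 hd2 hd3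
  have hxt1 : xt1 = dETNum ε a1 a2 a3 x1 x2 x3 / dETDet ε a1 a2 a3 x1 x2 x3 :=
    eq_div_of_mul_eq hΔ ((mul_comm _ _).trans (dETDet_mul_eq_dETNum h1 h2 h3))
  have hcleared := dETBiquadratic_div_mul (ε := ε) (aj := a2) (ak := a3) (x := x1)
    (Gj := a3 * x1 ^ 2 - a1 * x3 ^ 2) (Gk := a1 * x2 ^ 2 - a2 * x1 ^ 2)
    (y := dETNum ε a1 a2 a3 x1 x2 x3) hd2 hd3 hΔ
  rw [dETBiquadraticHomog_dETNum_dETDet, ← hH2, ← hH3, ← hxt1] at hcleared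
  exact (mul_eq_zero.mp hcleared).resolve_right
    (mul_ne_zero (mul_ne_zero hd2 hd3) (pow_ne_zero 2 hΔ))

end

theorem dET_biquadratic (a1 a2 a3 ε x1 x2 x3 xt1 xt2 xt3 H1 H2 H3 : ℝ)
    (h1 : xt1 - x1 = ε * a1 * (xt2 * x3 + x2 * xt3))
    (h2 : xt2 - x2 = ε * a2 * (xt3 * x1 + x3 * xt1))
    (h3 : xt3 - x3 = ε * a3 * (xt1 * x2 + x1 * xt2))
    (hd1 : 1 - ε ^ 2 * a2 * a3 * x1 ^ 2 ≠ 0)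
    (hd2 : 1 - ε ^ 2 * a3 * a1 * x2 ^ 2 ≠ 0)
    (hd3 : 1 - ε ^ 2 * a1 * a2 * x3 ^ 2 ≠ 0)
    (hH1 : H1 = (a2 * x3 ^ 2 - a3 * x2 ^ 2) / (1 - ε ^ 2 * a2 * a3 * x1 ^ 2))
    (hH2 : H2 = (a3 * x1 ^ 2 - a1 * x3 ^ 2) / (1 - ε ^ 2 * a3 * a1 * x2 ^ 2))
    (hH3 : H3 = (a1 * x2 ^ 2 - a2 * x1 ^ 2) / (1 - ε ^ 2 * a1 * a2 * x3 ^ 2)) :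
    (-(4 * ε ^ 2 * a2 * a3) * (x1 ^ 2 * xt1 ^ 2)
      + (1 + ε ^ 2 * a2 * H2) * (1 - ε ^ 2 * a3 * H3) * (x1 ^ 2 + xt1 ^ 2)
      - 2 * (1 - ε ^ 2 * a2 * H2) * (1 + ε ^ 2 * a3 * H3) * (x1 * xt1)
      + 4 * ε ^ 2 * H2 * H3 = 0) ∧
    (-(4 * ε ^ 2 * a3 * a1) * (x2 ^ 2 * xt2 ^ 2)
      + (1 + ε ^ 2 * a3 * H3) * (1 - ε ^ 2 * a1 * H1) * (x2 ^ 2 + xt2 ^ 2)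
      - 2 * (1 - ε ^ 2 * a3 * H3) * (1 + ε ^ 2 * a1 * H1) * (x2 * xt2)
      + 4 * ε ^ 2 * H3 * H1 = 0) ∧
    (-(4 * ε ^ 2 * a1 * a2) * (x3 ^ 2 * xt3 ^ 2)
      + (1 + ε ^ 2 * a1 * H1) * (1 - ε ^ 2 * a2 * H2) * (x3 ^ 2 + xt3 ^ 2)
      - 2 * (1 - ε ^ 2 * a1 * H1) * (1 + ε ^ 2 * a2 * H2) * (x3 * xt3)
      + 4 * ε ^ 2 * H1 * H2 = 0) := by
  exact ⟨dETBiquadratic_eq_zero h1 h2 h3 hd1 hd2 hd3 hH2 hH3,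
    dETBiquadratic_eq_zero h2 h3 h1 hd2 hd3 hd1 hH3 hH1,
    dETBiquadratic_eq_zero h3 h1 h2 hd3 hd1 hd2 hH1 hH2⟩
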